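/- arXiv:1108.2852 — 4 statements merged into one kernel-verified Lean document; each statement's English description precedes it below -/
import Mathlib

section
/- Let (a_n)_{n≥0} be a sequence of integers whose generating series satisfies Σ_{n≥0} a_n t^n = (h_0(a) + h_1(a)t + ⋯ + h_λ(a)t^λ)/(1−t)^d with h_λ(a) ≠ 0. Then for any r ≥ 1 the r-th Veronese series satisfies a^{⟨r⟩}(t) = (h_0(a^{⟨r⟩}) + h_1(a^{⟨r⟩})t + ⋯ + h_m(a^{⟨r⟩})t^m)/(1−t)^d where m = max(λ, d), and for every i ≥ 0 the coefficient of t^i in the polynomial (1−t)^d · a^{⟨r⟩}(t) equals Σ_{j=0}^{λ} C(r−1, d, ir−j) · h_j(a). -/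
/-!
Since `1 - tʳ = (1 - t)(1 + t + ⋯ + t^{r-1})`, the hypothesis gives
`(∑ aₙ tⁿ)(1 - tʳ)^d = h(t) (1 + t + ⋯ + t^{r-1})^d`, whose coefficient of `tᵏ` is
`∑ⱼ C(r-1, d, k-j) hⱼ`. Extracting the coefficients of the multiples of `r` commutes with
multiplication by a series in `tʳ` and sends `(1 - tʳ)^d` to `(1 - t)^d`, so
`(1 - t)^d a^{⟨r⟩}(t)` is the Veronese part of `h(t) (1 + ⋯ + t^{r-1})^d`. The degree bound
follows because `C(r-1, d, k) = 0` for `k > d(r-1)`.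
-/

/-- `vC r d i` is the number of tuples `(u₁,…,u_d) ∈ ℤ^d` with `0 ≤ uₗ ≤ r` for all `l`
and `u₁ + ⋯ + u_d = i`.  For `d = 0` this is `1` if `i = 0` and `0` otherwise. -/
def vC (r d : ℕ) (i : ℤ) : ℕ :=
  (Finset.univ.filter fun u : Fin d → Fin (r + 1) => (∑ l, ((u l : ℕ) : ℤ)) = i).card

/-- The numerator of the `r`-th Veronese series `a^{⟨r⟩}(t) = ∑_{n≥0} a_{nr} tⁿ` of a
series with denominator `(1−t)^d`: the power series `(1−t)^d · a^{⟨r⟩}(t)`. -/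
noncomputable def veroneseNum (a : ℕ → ℤ) (d r : ℕ) : PowerSeries ℤ :=
  PowerSeries.mk (fun n => a (n * r)) * (1 - PowerSeries.X) ^ d

open PowerSeries Finset
open scoped PowerSeries

namespace PowerSeries

section Veronese

variable {R : Type*} [CommRing R]

noncomputable def veronese (r : ℕ) : R⟦X⟧ →ₗ[R] R⟦X⟧ where
  toFun f := mk fun n => coeff (n * r) f
  map_add' f g := by ext; simp
  map_smul' c f := by ext; simp

@[simp]
lemma coeff_veronese (r n : ℕ) (f : R⟦X⟧) : coeff n (veronese r f) = coeff (n * r) f := by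
  simp [veronese]

lemma veronese_mul_expand {r : ℕ} (hr : r ≠ 0) (f g : R⟦X⟧) :
    veronese r (f * expand r hr g) = veronese r f * g := by
  ext n
  rw [coeff_veronese, coeff_mul, coeff_mul]
  symm
  have hr₀ : 0 < r := Nat.pos_of_ne_zero hr
  refine sum_of_injOn (fun p => (p.1 * r, p.2 * r)) ?_ ?_ ?_ ?_
  · intro p _ q _ hpq
    simp only [Prod.mk.injEq] at hpq
    exact Prod.ext (Nat.eq_of_mul_eq_mul_right hr₀ hpq.1) (Nat.eq_of_mul_eq_mul_right hr₀ hpq.2)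
  · intro p hp
    simp only [mem_coe, HasAntidiagonal.mem_antidiagonal] at hp ⊢
    rw [← hp, add_mul]
  · rintro ⟨u, k⟩ huk hnot
    rw [HasAntidiagonal.mem_antidiagonal] at huk
    by_cases hk : r ∣ k
    · obtain ⟨m, rfl⟩ := hk
      have hmn : m ≤ n := Nat.le_of_mul_le_mul_left (by linarith) hr₀
      refine absurd ⟨(n - m, m), ?_, ?_⟩ hnot
      · simp [hmn]
      · simp only [Prod.mk.injEq, Nat.sub_mul, mul_comm m r, and_true]
        omega
    · rw [coeff_expand_of_not_dvd r hr g hk, mul_zero]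
  · intro p _
    simp only [coeff_veronese]
    rw [mul_comm p.2 r, coeff_expand_mul]

end Veronese

end PowerSeries

lemma vC_eq_zero_of_neg (r d : ℕ) {i : ℤ} (hi : i < 0) : vC r d i = 0 := by
  rw [vC, card_eq_zero, filter_eq_empty_iff]
  intro u _ hu
  have : (0 : ℤ) ≤ ∑ l, ((u l : ℕ) : ℤ) := sum_nonneg fun _ _ => Int.natCast_nonneg _
  omega

lemma vC_eq_zero_of_lt (r d : ℕ) {i : ℤ} (hi : (d : ℤ) * r < i) : vC r d i = 0 := by
  rw [vC, card_eq_zero, filter_eq_empty_iff]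
  intro u _ hu
  have : ∑ l, ((u l : ℕ) : ℤ) ≤ ∑ _l : Fin d, (r : ℤ) :=
    sum_le_sum fun l _ => by exact_mod_cast Nat.le_of_lt_succ (u l).isLt
  simp only [sum_const, card_univ, Fintype.card_fin, nsmul_eq_mul] at this
  omega

section GeomSum

variable {R : Type*} [CommSemiring R]

lemma coeff_geom_sum_pow (s d m : ℕ) :
    coeff m ((∑ l ∈ range (s + 1), X ^ l : R⟦X⟧) ^ d) = vC s d m := by
  rw [sum_range, ← Fin.prod_const d, prod_univ_sum, Fintype.piFinset_univ, map_sum, vC,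
    card_filter, Nat.cast_sum]
  refine sum_congr rfl fun u _ => ?_
  rw [prod_pow_eq_pow_sum, coeff_X_pow]
  simp only [eq_comm (a := m)]
  norm_cast

lemma coeff_X_pow_mul_geom_sum_pow (s d j n : ℕ) :
    coeff n (X ^ j * (∑ l ∈ range (s + 1), X ^ l : R⟦X⟧) ^ d) = (vC s d (n - j : ℤ) : R) := by
  rw [coeff_X_pow_mul']
  split_ifs with hj
  · rw [coeff_geom_sum_pow, Nat.cast_sub hj]
  · rw [vC_eq_zero_of_neg _ _ (by omega), Nat.cast_zero]

lemma coeff_coe_mul_geom_sum_pow (p : Polynomial R) (s d n : ℕ) :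
    coeff n ((p : R⟦X⟧) * (∑ l ∈ range (s + 1), X ^ l) ^ d) =
      ∑ j ∈ range (p.natDegree + 1), (vC s d (n - j : ℤ) : R) * p.coeff j := by
  conv_lhs => rw [← Polynomial.coeToPowerSeries.ringHom_apply, p.as_sum_range_C_mul_X_pow]
  rw [map_sum, sum_mul, map_sum]
  refine sum_congr rfl fun j _ => ?_
  simp only [map_mul, map_pow, Polynomial.coeToPowerSeries.ringHom_apply, Polynomial.coe_C,
    Polynomial.coe_X]
  rw [mul_assoc, coeff_C_mul, coeff_X_pow_mul_geom_sum_pow, mul_comm]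

end GeomSum

lemma veroneseNum_eq_veronese {a : ℕ → ℤ} {d r : ℕ} {h : Polynomial ℤ} (hr : r ≠ 0)
    (hgen : mk a * (1 - X) ^ d = (h : ℤ⟦X⟧)) :
    veroneseNum a d r = veronese r ((h : ℤ⟦X⟧) * (∑ l ∈ range r, X ^ l) ^ d) := by
  have hexpand : expand r hr ((1 - X) ^ d : ℤ⟦X⟧) = (1 - X) ^ d * (∑ l ∈ range r, X ^ l) ^ d := by
    rw [← mul_pow, mul_neg_geom_sum, map_pow, map_sub, map_one, expand_X]
  rw [← hgen, mul_assoc, ← hexpand, veronese_mul_expand, veroneseNum]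
  congr 1
  ext n
  rw [coeff_veronese, coeff_mk, coeff_mk]

theorem stmt_2_general (a : ℕ → ℤ) (d lam : ℕ) (h : Polynomial ℤ)
    (hgen : PowerSeries.mk a * (1 - PowerSeries.X) ^ d = (h : PowerSeries ℤ))
    (hdeg : h.natDegree = lam)
    (r : ℕ) (hr : 1 ≤ r) :
    (∀ i : ℕ, max lam d < i → PowerSeries.coeff (R := ℤ) i (veroneseNum a d r) = 0) ∧
    (∀ i : ℕ, PowerSeries.coeff (R := ℤ) i (veroneseNum a d r)
        = ∑ j ∈ Finset.range (lam + 1),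
            (vC (r - 1) d ((i : ℤ) * (r : ℤ) - (j : ℤ)) : ℤ) * h.coeff j) := by
  obtain ⟨s, rfl⟩ : ∃ s, r = s + 1 := ⟨r - 1, by omega⟩
  have hcoeff : ∀ i : ℕ, coeff i (veroneseNum a d (s + 1)) = ∑ j ∈ range (lam + 1),
      (vC s d ((i : ℤ) * ((s + 1 : ℕ) : ℤ) - (j : ℤ)) : ℤ) * h.coeff j := fun i => by
    rw [veroneseNum_eq_veronese (Nat.succ_ne_zero s) hgen, coeff_veronese,
      coeff_coe_mul_geom_sum_pow, hdeg, Nat.cast_mul]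
  refine ⟨fun i hi => ?_, by simpa using hcoeff⟩
  rw [hcoeff]
  refine sum_eq_zero fun j hj => ?_
  have hj : j < i := by rw [mem_range] at hj; omega
  have hdi : d < i := by omega
  have hbound : (d : ℤ) * s < i * ((s + 1 : ℕ) : ℤ) - j := by push_cast; nlinarith
  rw [vC_eq_zero_of_lt _ _ hbound, Nat.cast_zero, zero_mul]

/-- Let `(a_n)` be an integer sequence with `∑ a_n tⁿ = (h₀ + h₁ t + ⋯ + h_λ t^λ)/(1−t)^d`,
`h_λ ≠ 0`.  Then for any `r ≥ 1`,
`a^{⟨r⟩}(t) = (h₀(a^{⟨r⟩}) + ⋯ + h_m(a^{⟨r⟩}) t^m)/(1−t)^d` with `m = max(λ,d)`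
(i.e. the coefficients of `(1−t)^d · a^{⟨r⟩}(t)` vanish above degree `m`), and for every
`i ≥ 0` the coefficient of `tⁱ` in `(1−t)^d · a^{⟨r⟩}(t)` equals
`∑_{j=0}^{λ} C(r−1, d, ir−j)·h_j(a)`. -/
theorem stmt_2 (a : ℕ → ℤ) (d lam : ℕ) (h : Polynomial ℤ)
    (hgen : PowerSeries.mk a * (1 - PowerSeries.X) ^ d = (h : PowerSeries ℤ))
    (hdeg : h.natDegree = lam) (hlam : h.coeff lam ≠ 0)
    (r : ℕ) (hr : 1 ≤ r) :
    (∀ i : ℕ, max lam d < i → PowerSeries.coeff (R := ℤ) i (veroneseNum a d r) = 0) ∧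
    (∀ i : ℕ, PowerSeries.coeff (R := ℤ) i (veroneseNum a d r)
        = ∑ j ∈ Finset.range (lam + 1),
            (vC (r - 1) d ((i : ℤ) * (r : ℤ) - (j : ℤ)) : ℤ) * h.coeff j) :=
  stmt_2_general a d lam h hgen hdeg r hr
end

section
/- Let 1 ≤ d ≤ r and 0 ≤ k ≤ d be integers. Then for every 0 ≤ i ≤ d, C(r−1, d, ir−k) = Σ_{j=0}^{k−1} C(r−1, d−1, (i−1)r−j) + Σ_{j=k}^{r−1} C(r−1, d−1, ir−j); equivalently, C^{r,d}_k = Σ_{j=0}^{k−1} (0, C^{r,d−1}_j) + Σ_{j=k}^{r−1} (C^{r,d−1}_j, 0), where (0,v) and (v,0) denote prepending, respectively appending, a zero entry to the vector v. -/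
/-- `gHat r d k i` is the `(i+1)`-st entry (`0 ≤ i ≤ ⌊d/2⌋+1`) of the vector
`ĝ^{r,d}_k ∈ ℤ^{⌊d/2⌋+2}`, defined by `g₀ = C(r−1,d,−k)` and
`g_i = C(r−1,d,ir−k) − C(r−1,d,(i−1)r−k)` for `i ≥ 1`; for `k ≥ r` the vector
`ĝ^{r,d}_k` is the zero vector.  The vector `g^{r,d}_k ∈ ℤ^{⌊d/2⌋+1}` is obtained
from `ĝ^{r,d}_k` by deleting its last entry, so its entries are `gHat r d k i`
for `0 ≤ i ≤ ⌊d/2⌋`; `last (g^{r,d}_k) = gHat r d k (d/2)` and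
`last (ĝ^{r,d}_k) = gHat r d k (d/2 + 1)`. -/
def gHat (r d k : ℕ) (i : ℕ) : ℤ :=
  if r ≤ k then 0
  else if i = 0 then (vC (r - 1) d (-(k : ℤ)) : ℤ)
  else (vC (r - 1) d ((i : ℤ) * (r : ℤ) - (k : ℤ)) : ℤ)
       - (vC (r - 1) d (((i : ℤ) - 1) * (r : ℤ) - (k : ℤ)) : ℤ)

open Finset

lemma vC_succ (r d : ℕ) (i : ℤ) :
    vC r (d + 1) i = ∑ v ∈ range (r + 1), vC r d (i - v) := by
  rw [vC, card_eq_sum_card_fiberwise (f := fun u : Fin (d + 1) → Fin (r + 1) => u 0)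
      (t := univ) fun _ _ => mem_univ _, ← Fin.sum_univ_eq_sum_range]
  refine sum_congr rfl fun v _ => ?_
  refine card_bij' (fun u _ => Fin.tail u) (fun u _ => Fin.cons v u) ?_ ?_ ?_ ?_
  · simp only [mem_filter, mem_univ, true_and, Fin.sum_univ_succ]
    rintro u ⟨rfl, rfl⟩
    simp [Fin.tail]
  · simp only [mem_filter, mem_univ, true_and, Fin.sum_univ_succ]
    intro u hu
    simp [hu]
  · simp only [mem_filter, mem_univ, true_and]
    rintro u ⟨-, rfl⟩
    exact Fin.cons_self_tail u
  · intro u _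
    rfl

lemma sum_range_sub_eq_sum_range_add_sum_Ico {M : Type*} [AddCommMonoid M] (f : ℤ → M)
    (n : ℤ) {k r : ℕ} (hkr : k ≤ r) :
    ∑ v ∈ range r, f (n - k - v) = ∑ j ∈ range k, f (n - r - j) + ∑ j ∈ Ico k r, f (n - j) := by
  obtain ⟨l, rfl⟩ := Nat.exists_eq_add_of_le' hkr
  rw [sum_range_add, add_comm, sum_Ico_eq_sum_range, Nat.add_sub_cancel]
  congr 1 <;> refine sum_congr rfl fun x _ => congrArg f ?_ <;> push_cast <;> ring

/-- Let `1 ≤ d ≤ r` and `0 ≤ k ≤ d`.  Then for every `0 ≤ i ≤ d`,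
`C(r−1, d, ir−k) = ∑_{j=0}^{k−1} C(r−1, d−1, (i−1)r−j) + ∑_{j=k}^{r−1} C(r−1, d−1, ir−j)`,
i.e. `C^{r,d}_k = ∑_{j=0}^{k−1} (0, C^{r,d−1}_j) + ∑_{j=k}^{r−1} (C^{r,d−1}_j, 0)`. -/
theorem stmt_7 (r d k : ℕ) (hd : 1 ≤ d) (hdr : d ≤ r) (hk : k ≤ d) :
    ∀ i : ℕ, i ≤ d →
      (vC (r - 1) d ((i : ℤ) * (r : ℤ) - (k : ℤ)) : ℤ)
        = (∑ j ∈ Finset.range k,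
            (vC (r - 1) (d - 1) (((i : ℤ) - 1) * (r : ℤ) - (j : ℤ)) : ℤ))
          + ∑ j ∈ Finset.Ico k r,
            (vC (r - 1) (d - 1) ((i : ℤ) * (r : ℤ) - (j : ℤ)) : ℤ) := by
  intro i _
  obtain ⟨m, rfl⟩ := Nat.exists_eq_add_of_le' hd
  have hr : r - 1 + 1 = r := Nat.sub_add_cancel (hd.trans hdr)
  rw [Nat.add_sub_cancel, vC_succ, hr, Nat.cast_sum,
    sum_range_sub_eq_sum_range_add_sum_Ico (fun n => (vC (r - 1) m n : ℤ)) _ (hk.trans hdr)]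
  simp only [sub_one_mul]
end

section
/- Let 1 ≤ d ≤ r be integers with d even, and let d+1 ≤ k ≤ r−1. Then last(ĝ^{r,d}_k) + last(ĝ^{r,d}_{r−(k−d)}) = 0. -/
lemma vC_symm (r d : ℕ) (i : ℤ) : vC r d i = vC r d ((d : ℤ) * r - i) := by
  unfold vC
  apply Finset.card_bij' (fun u _ l => (u l).rev) (fun u _ l => (u l).rev)
  · intro u _; funext l; simp
  · intro u _; funext l; simp
  · intro u hu
    simp only [Finset.mem_filter, Finset.mem_univ, true_and] at hu ⊢
    have key : ∀ l : Fin d, (((u l).rev : ℕ) : ℤ) = (r : ℤ) - ((u l : ℕ) : ℤ) := by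
      intro l
      have h1 := (u l).is_le
      simp [Fin.val_rev]
      omega
    rw [Finset.sum_congr rfl fun l _ => key l, Finset.sum_sub_distrib,
      Finset.sum_const, Finset.card_univ, Fintype.card_fin, hu]
    ring
  · intro u hu
    simp only [Finset.mem_filter, Finset.mem_univ, true_and] at hu ⊢
    have key : ∀ l : Fin d, (((u l).rev : ℕ) : ℤ) = (r : ℤ) - ((u l : ℕ) : ℤ) := by
      intro l
      have h1 := (u l).is_le
      simp [Fin.val_rev]
      omega
    rw [Finset.sum_congr rfl fun l _ => key l, Finset.sum_sub_distrib,
      Finset.sum_const, Finset.card_univ, Fintype.card_fin, hu]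
    ring

/-- Let `1 ≤ d ≤ r` with `d` even and `d+1 ≤ k ≤ r−1`.  Then
`last(ĝ^{r,d}_k) + last(ĝ^{r,d}_{r−(k−d)}) = 0`. -/
theorem stmt_10 (r d k : ℕ) (hd : 1 ≤ d) (hdr : d ≤ r) (heven : Even d)
    (hk1 : d + 1 ≤ k) (hk2 : k ≤ r - 1) :
    gHat r d k (d / 2 + 1) + gHat r d (r - (k - d)) (d / 2 + 1) = 0 := by
  obtain ⟨m, hm⟩ := heven
  have hm2 : d = 2 * m := by omega
  have hk : ¬ r ≤ k := by omega
  have hk' : ¬ r ≤ r - (k - d) := by omega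
  have hc : ((r - (k - d) : ℕ) : ℤ) = (r : ℤ) - k + d := by omega
  have hc1 : ((r - 1 : ℕ) : ℤ) = (r : ℤ) - 1 := by omega
  have hdiv : d / 2 = m := by omega
  simp only [gHat, if_neg hk, if_neg hk', hdiv, Nat.add_eq_zero,
    if_neg (by omega : ¬ (m + 1 = 0 ∧ True))]
  have e1 : vC (r - 1) d (((m : ℤ) + 1) * r - ((r - (k - d) : ℕ) : ℤ))
      = vC (r - 1) d (((m : ℤ) + 1 - 1) * r - k) := by
    rw [vC_symm (r-1) d (((m : ℤ) + 1) * r - ((r - (k - d) : ℕ) : ℤ))]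
    congr 1
    rw [hc, hc1, hm2]; push_cast; ring
  have e2 : vC (r - 1) d (((m : ℤ) + 1 - 1) * r - ((r - (k - d) : ℕ) : ℤ))
      = vC (r - 1) d (((m : ℤ) + 1) * r - k) := by
    rw [vC_symm (r-1) d (((m : ℤ) + 1 - 1) * r - ((r - (k - d) : ℕ) : ℤ))]
    congr 1
    rw [hc, hc1, hm2]; push_cast; ring
  push_cast
  rw [e1, e2]
  simp only [and_false, if_false]
  ring
end

section
/- Let 1 ≤ d ≤ r and 0 ≤ k ≤ d−1 be integers. Then the chain of componentwise inequalities g^{1,d}_k ≤ g^{d,d}_k ≤ g^{d+1,d}_k ≤ ⋯ ≤ g^{r,d}_k ≤ g^{r+1,d}_k holds; that is, g^{1,d}_k ≤ g^{d,d}_k componentwise, and g^{s,d}_k ≤ g^{s+1,d}_k componentwise for every d ≤ s ≤ r. -/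
namespace StmtAux

lemma vC_neg {r d : ℕ} {i : ℤ} (h : i < 0) : vC r d i = 0 := by
  rw [vC, Finset.card_eq_zero, Finset.filter_eq_empty_iff]
  intro u _ hs
  have h0 : (0:ℤ) ≤ ∑ l, ((u l : ℕ) : ℤ) :=
    Finset.sum_nonneg fun l _ => Int.natCast_nonneg _
  rw [hs] at h0; omega

lemma vC_dim_zero (r : ℕ) (i : ℤ) : vC r 0 i = if i = 0 then 1 else 0 := by
  rw [vC]
  rcases eq_or_ne i 0 with h | h
  · subst h
    rw [if_pos rfl, Finset.filter_true_of_mem (by intro u _; simp), Finset.card_univ]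
    simp
  · rw [if_neg h, Finset.card_eq_zero, Finset.filter_eq_empty_iff]
    intro u _ hs
    apply h
    simpa using hs.symm

lemma vC_dim_succ (r d : ℕ) (i : ℤ) :
    vC r (d+1) i = ∑ v : Fin (r+1), vC r d (i - v) := by
  rw [vC]
  rw [Finset.card_eq_sum_card_fiberwise
      (f := fun u : Fin (d+1) → Fin (r+1) => u 0) (t := Finset.univ)
      (fun x _ => Finset.mem_univ _)]
  refine Finset.sum_congr rfl fun v _ => ?_
  rw [Finset.filter_filter, vC]
  refine Finset.card_bij' (fun u _ => Fin.tail u) (fun w _ => Fin.cons v w) ?_ ?_ ?_ ?_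
  · intro u hu
    simp only [Finset.mem_filter, Finset.mem_univ, true_and] at hu ⊢
    obtain ⟨hsum, h0⟩ := hu
    rw [Fin.sum_univ_succ, h0] at hsum
    simp only [Fin.tail]
    omega
  · intro w hw
    simp only [Finset.mem_filter, Finset.mem_univ, true_and] at hw ⊢
    constructor
    · rw [Fin.sum_univ_succ]
      simp only [Fin.cons_zero, Fin.cons_succ]
      omega
    · simp
  · intro u hu
    simp only [Finset.mem_filter, Finset.mem_univ, true_and] at hu
    show Fin.cons v (Fin.tail u) = u
    rw [← hu.2]
    exact Fin.cons_self_tail u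
  · intro w _
    simp [Fin.tail_cons]


lemma rev_sum (r d : ℕ) (u : Fin d → Fin (r+1)) :
    (∑ l, (((u l).rev : ℕ) : ℤ)) = d * r - ∑ l, ((u l : ℕ) : ℤ) := by
  have key : ∀ x : Fin (r+1), ((x.rev : ℕ) : ℤ) = (r : ℤ) - (x : ℕ) := by
    intro x
    have hx : (x : ℕ) ≤ r := Fin.is_le x
    rw [Fin.val_rev]
    push_cast [Nat.succ_sub_one]
    omega
  rw [Finset.sum_congr rfl (fun l _ => key (u l)), Finset.sum_sub_distrib,
    Finset.sum_const, Finset.card_univ, Fintype.card_fin]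
  push_cast
  ring

lemma vC_symm (r d : ℕ) (a : ℤ) : vC r d a = vC r d ((d : ℤ) * r - a) := by
  rw [vC, vC]
  refine Finset.card_bij' (fun u _ => fun l => (u l).rev) (fun u _ => fun l => (u l).rev)
    ?_ ?_ ?_ ?_
  · intro u hu
    simp only [Finset.mem_filter, Finset.mem_univ, true_and] at hu ⊢
    rw [rev_sum, hu]
  · intro u hu
    simp only [Finset.mem_filter, Finset.mem_univ, true_and] at hu ⊢
    rw [rev_sum, hu]
    ring
  · intro u _; funext l; simp
  · intro u _; funext l; simp

lemma vC_zero_sum (r d : ℕ) : vC r d 0 = 1 := by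
  induction d with
  | zero => simp [vC]
  | succ d ih =>
    rw [vC_dim_succ, Fin.sum_univ_succ]
    have h0 : ((0 : Fin (r+1)) : ℕ) = 0 := rfl
    rw [h0]
    norm_num [ih]
    intro v
    apply vC_neg
    have : (0:ℕ) < ((v.succ : Fin (r+1)) : ℕ) := by
      simp [Fin.val_succ]
    omega

lemma vC_cap_zero (d : ℕ) (a : ℤ) : vC 0 d a = if a = 0 then 1 else 0 := by
  rcases lt_trichotomy a 0 with h | h | h
  · rw [vC_neg h, if_neg (by omega)]
  · subst h; rw [if_pos rfl, vC_zero_sum]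
  · rw [if_neg (by omega), vC_symm]
    apply vC_neg
    push_cast
    omega

/-- key identity: difference in dimension d+1 is a difference of counts in dimension d -/
lemma vC_diff (r d : ℕ) (t : ℤ) :
    (vC r (d+1) t : ℤ) - vC r (d+1) (t - 1) = (vC r d t : ℤ) - vC r d (t - (r+1)) := by
  rw [vC_dim_succ, vC_dim_succ]
  push_cast
  rw [Fin.sum_univ_eq_sum_range (fun v => ((vC r d (t - v) : ℤ))),
      Fin.sum_univ_eq_sum_range (fun v => ((vC r d (t - 1 - v) : ℤ)))]
  have h2 : ∀ i : ℕ, t - 1 - (i:ℤ) = t - ((i:ℤ)+1) := by intro i; ring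
  calc (∑ i ∈ Finset.range (r+1), (vC r d (t - i) : ℤ))
        - ∑ i ∈ Finset.range (r+1), (vC r d (t - 1 - i) : ℤ)
      = ∑ i ∈ Finset.range (r+1),
          ((vC r d (t - i) : ℤ) - vC r d (t - ((i:ℤ)+1))) := by
        rw [Finset.sum_sub_distrib]
        congr 1
        exact Finset.sum_congr rfl fun i _ => by rw [h2]
    _ = (vC r d (t - (0:ℕ)) : ℤ) - vC r d (t - ((r+1 : ℕ) : ℤ)) := by
        have hs := Finset.sum_range_sub' (f := fun i : ℕ => (vC r d (t - i) : ℤ)) (n := r+1)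
        push_cast at hs ⊢
        have h1 : ∀ i : ℕ, t - ((i:ℤ) + 1) = t - i - 1 := fun i => by ring
        simp only [h1] at *
        convert hs using 2 <;> push_cast <;> ring
    _ = (vC r d t : ℤ) - vC r d (t - (r+1)) := by norm_num

lemma vC_telescope (r d : ℕ) {a b : ℤ} (h : a ≤ b) :
    (vC r d b : ℤ) - vC r d a
      = ∑ x ∈ Finset.range (b - a).toNat, ((vC r d (a + x + 1) : ℤ) - vC r d (a + x)) := by
  have hs := Finset.sum_range_sub (f := fun x : ℕ => (vC r d (a + x) : ℤ)) (n := (b - a).toNat)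
  push_cast at hs
  have h1 : ∀ x : ℕ, a + ((x:ℤ) + 1) = a + x + 1 := fun x => by ring
  simp only [h1] at hs
  rw [hs]
  have h2 : a + ((b - a).toNat : ℤ) = b := by
    rw [Int.toNat_of_nonneg (by omega)]; ring
  rw [h2]
  norm_num

/-- unimodality on the lower half -/
lemma vC_mono (d : ℕ) : ∀ (r : ℕ) (a b : ℤ), a ≤ b → a + b ≤ (d:ℤ) * r →
    (vC r d a : ℤ) ≤ vC r d b := by
  induction d with
  | zero =>
    intro r a b hab hs
    simp only [Nat.cast_zero, zero_mul] at hs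
    rw [vC_dim_zero, vC_dim_zero]
    split_ifs <;> omega
  | succ e ih =>
    intro r a b hab hs
    set D : ℤ := ((e:ℤ)+1) * r with hD
    have hcast : (((e+1:ℕ)):ℤ) * (r:ℤ) = D := by push_cast; ring
    rw [hcast] at hs
    set b₁ : ℤ := min b (D - b) with hb₁
    have hbL := min_le_left b (D - b)
    have hbR := min_le_right b (D - b)
    have hvb : (vC r (e+1) b : ℤ) = vC r (e+1) b₁ := by
      rcases min_cases b (D - b) with ⟨h1, _⟩ | ⟨h1, _⟩
      · rw [hb₁, h1]
      · rw [hb₁, h1, vC_symm r (e+1) b, hcast]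
    have hab₁ : a ≤ b₁ := le_min hab (by linarith)
    rw [hvb]
    have hterm : ∀ x ∈ Finset.range (b₁ - a).toNat,
        (0:ℤ) ≤ (vC r (e+1) (a + x + 1) : ℤ) - vC r (e+1) (a + x) := by
      intro x hx
      simp only [Finset.mem_range] at hx
      have hxZ : (x : ℤ) < b₁ - a := by
        have h0 := Int.toNat_of_nonneg (show (0:ℤ) ≤ b₁ - a by linarith)
        omega
      have key := vC_diff r e (a + x + 1)
      have h1 : a + (x:ℤ) + 1 - 1 = a + x := by ring
      rw [h1] at key
      rw [key]
      have her : (e:ℤ) * r = D - r := by rw [hD]; ring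
      have hsub : (vC r e ((a + x + 1) - (r+1)) : ℤ) ≤ vC r e (a + x + 1) := by
        apply ih
        · linarith
        · rw [her]; linarith
      linarith
    have hpos : (0:ℤ) ≤ (vC r (e+1) b₁ : ℤ) - vC r (e+1) a := by
      rw [vC_telescope r (e+1) hab₁]
      exact Finset.sum_nonneg hterm
    linarith

lemma sum_le_sum_shift (f g : ℕ → ℤ) (L L' e₀ : ℕ) (hLe : L + e₀ ≤ L')
    (hfg : ∀ x, x < L → f x ≤ g (x + e₀)) (hg : ∀ y, y < L' → 0 ≤ g y) :
    ∑ x ∈ Finset.range L, f x ≤ ∑ y ∈ Finset.range L', g y := by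
  have h1 : ∑ x ∈ Finset.range L, f x ≤ ∑ x ∈ Finset.range L, g (x + e₀) :=
    Finset.sum_le_sum fun x hx => hfg x (Finset.mem_range.mp hx)
  have h2 : ∑ x ∈ Finset.range L, g (x + e₀) ≤ ∑ x ∈ Finset.range (L' - e₀), g (x + e₀) := by
    apply Finset.sum_le_sum_of_subset_of_nonneg
    · exact Finset.range_subset_range.mpr (by omega)
    · intro x hx _
      exact hg (x + e₀) (by simp only [Finset.mem_range] at hx; omega)
  have h3 : ∑ y ∈ Finset.range L', g y
      = ∑ y ∈ Finset.range e₀, g y + ∑ x ∈ Finset.range (L' - e₀), g (e₀ + x) := by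
    have h3' := Finset.sum_range_add g e₀ (L' - e₀)
    have hE : e₀ + (L' - e₀) = L' := by omega
    rw [hE] at h3'
    exact h3'
  have h4 : (0:ℤ) ≤ ∑ y ∈ Finset.range e₀, g y :=
    Finset.sum_nonneg fun y hy => hg y (Finset.mem_range.mp hy |>.trans_le (by omega))
  have h5 : ∑ x ∈ Finset.range (L' - e₀), g (x + e₀)
      = ∑ x ∈ Finset.range (L' - e₀), g (e₀ + x) :=
    Finset.sum_congr rfl fun x _ => by rw [Nat.add_comm]
  linarith [h1, h2, h3, h4, h5]

set_option maxHeartbeats 1000000 in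
/-- the main inductive lemma -/
lemma main_lemma (d : ℕ) : ∀ (p : ℕ) (a δ : ℤ), d ≤ p + 1 → 0 ≤ δ → 2 * δ ≤ (d:ℤ) + 1 →
    2 * a ≤ (d:ℤ) * p + p + 1 →
    (vC p d a : ℤ) - vC p d (a - (p+1))
      ≤ (vC (p+1) d (a + δ) : ℤ) - vC (p+1) d (a + δ - (p+2)) := by
  induction d with
  | zero =>
    intro p a δ _ hδ0 hδ1 ha
    have hδ : δ = 0 := by omega
    subst hδ
    simp only [Nat.cast_zero, zero_mul, zero_add] at ha
    simp only [vC_dim_zero]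
    have h1 : ¬ (a - ((p:ℤ)+1) = 0) := by omega
    have h2 : ¬ (a + 0 - ((p:ℤ)+2) = 0) := by omega
    rw [if_neg h1, if_neg h2]
    have h3 : a + 0 = a := by ring
    rw [h3]
  | succ e ih =>
    intro p a δ hdp hδ0 hδ1 ha
    push_cast at hδ1 ha
    set D : ℤ := ((e:ℤ)+1) * p with hD
    set D' : ℤ := ((e:ℤ)+1) * (p+1) with hD'
    have hDD' : D' = D + ((e:ℤ)+1) := by rw [hD, hD']; ring
    set a' : ℤ := a + δ with ha'
    set m : ℤ := min a (D - a) with hm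
    set m' : ℤ := min a' (D' - a') with hm'
    set σ : ℤ := max (δ - 1) 0 with hσ
    have hσ0 : 0 ≤ σ := le_max_right _ _
    have hσ1 : δ - 1 ≤ σ := le_max_left _ _
    have hσδ : σ ≤ δ := by rw [hσ]; omega
    have hσd : σ ≤ (e:ℤ) + 1 - δ := by rw [hσ]; omega
    have hmL : m ≤ a := min_le_left _ _
    have hmR : m ≤ D - a := min_le_right _ _
    have hmL' : m' ≤ a' := min_le_left _ _
    have hmR' : m' ≤ D' - a' := min_le_right _ _
    have hma : a - ((p:ℤ)+1) ≤ m := le_min (by linarith) (by linarith)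
    have hma' : a' - ((p:ℤ)+2) ≤ m' := le_min (by linarith) (by linarith)
    have hmm' : m + σ ≤ m' := le_min (by linarith) (by linarith)
    have hcast : (((e+1:ℕ)):ℤ) * (p:ℤ) = D := by push_cast; ring
    have hcast' : (((e+1:ℕ)):ℤ) * (((p+1:ℕ)):ℤ) = D' := by push_cast; ring
    have hva : (vC p (e+1) a : ℤ) = vC p (e+1) m := by
      rcases min_cases a (D - a) with ⟨h1, _⟩ | ⟨h1, _⟩
      · rw [hm, h1]
      · rw [hm, h1, vC_symm p (e+1) a, hcast]
    have hva' : (vC (p+1) (e+1) a' : ℤ) = vC (p+1) (e+1) m' := by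
      rcases min_cases a' (D' - a') with ⟨h1, _⟩ | ⟨h1, _⟩
      · rw [hm', h1]
      · rw [hm', h1, vC_symm (p+1) (e+1) a', hcast']
    have hexp : ((e:ℤ)+1) * (p:ℤ) = (e:ℤ)*p + p := by ring
    have h2m : 2 * m ≤ D := by linarith
    have h2m' : 2 * m' ≤ D' := by linarith
    clear_value m m' σ a'
    clear hm hm' hσ
    rw [hva, hva']
    rw [vC_telescope p (e+1) hma, vC_telescope (p+1) (e+1) hma']
    have hL : ((m - (a - ((p:ℤ)+1))).toNat : ℤ) = m - a + p + 1 := by omega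
    have hL' : ((m' - (a' - ((p:ℤ)+2))).toNat : ℤ) = m' - a' + p + 2 := by omega
    have he₀ : (((σ - δ + 1).toNat : ℕ) : ℤ) = σ - δ + 1 := by omega
    apply sum_le_sum_shift _ _ _ _ ((σ - δ + 1).toNat)
    · -- length inequality
      omega
    · -- pointwise inequality
      intro x hx
      have hxZ : (x:ℤ) < m - a + p + 1 := by omega
      set t : ℤ := a - ((p:ℤ)+1) + x + 1 with htdef
      have key1 := vC_diff p e t
      have e1 : t - 1 = a - ((p:ℤ)+1) + x := by rw [htdef]; ring
      rw [e1] at key1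
      rw [key1]
      have key2 := vC_diff (p+1) e (t + σ)
      have e2 : a' - ((p:ℤ)+2) + ((x + (σ - δ + 1).toNat : ℕ) : ℤ) + 1 = t + σ := by
        push_cast [he₀]
        rw [htdef, ha']
        ring
      have e3 : a' - ((p:ℤ)+2) + ((x + (σ - δ + 1).toNat : ℕ) : ℤ) = t + σ - 1 := by
        rw [← e2]; ring
      rw [e2, e3, key2]
      have e4 : t + σ - ((((p+1:ℕ)):ℤ) + 1) = t + σ - (((p:ℤ)) + 2) := by push_cast; ring
      rw [e4]
      have htm : t ≤ m := by omega
      have h2t : 2 * t ≤ (e:ℤ) * p + p + 1 := by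
        rw [hD, hexp] at h2m
        linarith
      exact ih p t σ (by omega) hσ0 (by push_cast; omega) h2t
    · -- nonnegativity of RHS terms
      intro y hy
      have hyZ : (y:ℤ) < m' - a' + p + 2 := by omega
      set u : ℤ := a' - ((p:ℤ)+2) + y + 1 with hu
      have huZ : u ≤ m' := by omega
      have key := vC_mono (e+1) (p+1) (u - 1) u (by omega)
        (by rw [hcast']; linarith)
      have e5 : a' - ((p:ℤ)+2) + (y:ℤ) = u - 1 := by rw [hu]; ring
      rw [e5]
      linarith

end StmtAux


open StmtAux in
/-- Let `1 ≤ d ≤ r` and `0 ≤ k ≤ d−1`.  Then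
`g^{1,d}_k ≤ g^{d,d}_k ≤ g^{d+1,d}_k ≤ ⋯ ≤ g^{r,d}_k ≤ g^{r+1,d}_k` componentwise:
`g^{1,d}_k ≤ g^{d,d}_k` and `g^{s,d}_k ≤ g^{s+1,d}_k` for every `d ≤ s ≤ r`. -/
theorem stmt_17 (r d k : ℕ) (hd : 1 ≤ d) (hdr : d ≤ r) (hk : k ≤ d - 1) :
    (∀ i : ℕ, i ≤ d / 2 → gHat 1 d k i ≤ gHat d d k i) ∧
    (∀ s : ℕ, d ≤ s → s ≤ r → ∀ i : ℕ, i ≤ d / 2 → gHat s d k i ≤ gHat (s + 1) d k i) := by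
  have hkd : k < d := by omega
  constructor
  · -- part 1 : g^{1,d}_k ≤ g^{d,d}_k
    intro i hi
    have h2i : 2 * i ≤ d := by omega
    have hnot : ¬ (d ≤ k) := by omega
    rw [gHat, gHat, if_neg hnot]
    -- RHS nonneg facts
    have hRpos : ∀ j : ℕ, 1 ≤ j → 2 * j ≤ d →
        (vC (d-1) d (((j:ℤ)-1) * d - k) : ℤ) ≤ vC (d-1) d ((j:ℤ) * d - k) := by
      intro j hj1 hj2
      apply vC_mono
      · have : (0:ℤ) ≤ (d:ℤ) := by positivity
        nlinarith [this]
      · have hd1 : ((d - 1 : ℕ) : ℤ) = (d:ℤ) - 1 := by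
          rw [Nat.cast_sub hd]; norm_num
        rw [hd1]
        have h1 : ((j:ℤ) - 1) * d - k + ((j:ℤ) * d - k) = (2*(j:ℤ) - 1) * d - 2*k := by ring
        rw [h1]
        have h2 : (2*(j:ℤ) - 1) * d ≤ ((d:ℤ) - 1) * d := by
          apply mul_le_mul_of_nonneg_right
          · have : 2 * (j:ℤ) ≤ d := by exact_mod_cast hj2
            linarith
          · positivity
        have h3 : (d:ℤ) * ((d:ℤ) - 1) = ((d:ℤ) - 1) * d := by ring
        rw [h3]
        have hk0 : (0:ℤ) ≤ k := by positivity
        linarith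
    split_ifs with h1k hi0 hi0
    · -- 1 ≤ k, i = 0
      positivity
    · -- 1 ≤ k, i ≥ 1
      have := hRpos i (by omega) h2i
      linarith
    · -- k = 0, i = 0
      have hk0 : k = 0 := by omega
      subst hk0
      have e1 : (-(0:ℕ) : ℤ) = 0 := by norm_num
      rw [e1, vC_zero_sum, vC_zero_sum]
    · -- k = 0, i ≥ 1
      have hk0 : k = 0 := by omega
      subst hk0
      have hL1 : (vC (1-1) d ((i:ℤ) * 1 - 0) : ℤ) - vC (1-1) d (((i:ℤ)-1) * 1 - 0)
          ≤ 0 := by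
        norm_num [vC_cap_zero]
        split_ifs <;> norm_num
      have := hRpos i (by omega) h2i
      norm_num at hL1 this ⊢
      linarith
  · -- part 2 : monotone in s
    intro s hds hsr i hi
    have h2i : 2 * i ≤ d := by omega
    have hks : ¬ (s ≤ k) := by omega
    have hks1 : ¬ (s + 1 ≤ k) := by omega
    obtain ⟨p, rfl⟩ : ∃ p, s = p + 1 := ⟨s - 1, by omega⟩
    rw [gHat, gHat, if_neg hks, if_neg hks1]
    split_ifs with hi0
    · -- i = 0
      have e1 : (p + 1 - 1 : ℕ) = p := by omega
      have e2 : (p + 1 + 1 - 1 : ℕ) = p + 1 := by omega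
      rw [e1, e2]
      rcases Nat.eq_zero_or_pos k with hk0 | hk1
      · subst hk0
        norm_num [vC_zero_sum]
      · rw [vC_neg (by push_cast; omega), vC_neg (by push_cast; omega)]
    · -- i ≥ 1
      have hi1 : 1 ≤ i := by omega
      have e1 : (p + 1 - 1 : ℕ) = p := by omega
      have e2 : (p + 1 + 1 - 1 : ℕ) = p + 1 := by omega
      rw [e1, e2]
      have key := main_lemma d p ((i:ℤ) * (p+1) - k) i
        (by omega)
        (by positivity)
        (by
          have : (2*i:ℤ) ≤ d := by exact_mod_cast h2i
          linarith)
        (by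
          have hid : (2*i:ℤ) ≤ d := by exact_mod_cast h2i
          have hdp1 : (d:ℤ) ≤ p + 1 := by exact_mod_cast hds
          have hknn : (0:ℤ) ≤ k := by positivity
          have h5 : 2 * ((i:ℤ) * (p+1)) ≤ (d:ℤ) * (p+1) := by
            have : (0:ℤ) ≤ (p:ℤ) + 1 := by positivity
            nlinarith
          nlinarith)
      have eL1 : (i:ℤ) * (p+1) - k - ((p:ℤ)+1) = ((i:ℤ) - 1) * ((p:ℕ)+1:ℤ) - k := by ring
      have eR1 : (i:ℤ) * (p+1) - k + i = (i:ℤ) * (((p:ℕ)+1:ℤ)+1) - k := by ring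
      have eR2 : (i:ℤ) * (p+1) - k + i - ((p:ℤ)+2) = ((i:ℤ) - 1) * (((p:ℕ)+1:ℤ)+1) - k := by ring
      rw [eL1, eR2, eR1] at key
      push_cast at key ⊢
      convert key using 3 <;> push_cast <;> ring
end
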